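/- Let (Ω, 𝒜, P) be a probability space, let d, M ≥ 1, τ ≥ 1, μ > 0, G ≥ 0, 0 < η ≤ 1, and let w_1, …, w_M be nonnegative reals with Σ_m w_m = 1. Let F_m : ℝ^d → ℝ and G_m : ℝ^d → ℝ^d satisfy the μ-strong-convexity inequality 2(F_m(v) − F_m(w)) ≥ 2⟨v − w, G_m(w)⟩ + μ‖v − w‖² for all v, w ∈ ℝ^d and all m; set F = Σ_m w_m F_m, let θ* be a global minimizer of F with F* = F(θ*), suppose F_m* ≤ F_m(v) for all v and m, and set Γ = F* − Σ_m w_m F_m*. Let θ̂ : Ω → ℝ^d and g_{m,i} : Ω → ℝ^d (i ∈ {1,…,τ}) be random vectors (all integrands appearing below integrable) with E[‖g_{m,i}‖²] ≤ G², define the local iterates θ_m^i = θ̂ − η Σ_{j=1}^{i−1} g_{m,j}, and assume the unbiasedness identities E[⟨θ* − θ_m^i, g_{m,i}⟩] = E[⟨θ* − θ_m^i, G_m(θ_m^i)⟩] for all m and all i ∈ {2,…,τ}. Then: 2η Σ_{m=1}^M w_m Σ_{i=2}^τ E[⟨θ* − θ̂, g_{m,i}⟩] ≤ −μη(1 − η)(τ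 − 1) E[‖θ̂ − θ*‖²] + η²(τ − 1)G² + (1 + μ(1 − η)) η² G² τ(τ−1)(2τ−1)/6 + 2η(τ − 1)Γ. -/

import Mathlib

open MeasureTheory Finset
open scoped InnerProductSpace

/-! Split `⟪θ* - θ̂, g⟫ = ⟪θ* - θ, g⟫ + ⟪θ - θ̂, g⟫` at the local iterate `θ = θ_m^i`. By
unbiasedness and strong convexity the first term is at most `F_m(θ*) - F_m* - μ/2 ‖θ - θ*‖²`;
the second is controlled by Young's inequality. Expanding `‖η (θ̂ - θ*) + (θ - θ̂)‖² ≥ 0` gives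
`η ‖θ - θ*‖² ≥ η (1 - η) ‖θ̂ - θ*‖² - (1 - η) ‖θ - θ̂‖²`, and the drift `θ - θ̂`, a sum of
`i - 1` stochastic gradients scaled by `η`, has second moment at most `η² (i - 1)² G²`.
Summing over `i` produces `∑ (i - 1)² = τ (τ - 1) (2τ - 1) / 6`, and averaging over `m` turns
`∑ w_m (F_m(θ*) - F_m*)` into `Γ`. -/

lemma norm_sum_sq_le_card_mul {E ι : Type*} [SeminormedAddCommGroup E] (s : Finset ι)
    (x : ι → E) : ‖∑ j ∈ s, x j‖ ^ 2 ≤ #s * ∑ j ∈ s, ‖x j‖ ^ 2 :=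
  (pow_le_pow_left₀ (norm_nonneg _) (norm_sum_le _ _) 2).trans sq_sum_le_card_mul_sum_sq

section InnerProductSpace

variable {E : Type*} [NormedAddCommGroup E] [InnerProductSpace ℝ E]

def IsStronglyConvexWrt (μ : ℝ) (f : E → ℝ) (grad : E → E) : Prop :=
  ∀ v u, 2 * (f v - f u) ≥ 2 * ⟪v - u, grad u⟫_ℝ + μ * ‖v - u‖ ^ 2

lemma IsStronglyConvexWrt.inner_le {μ fmin : ℝ} {f : E → ℝ} {grad : E → E}
    (hsc : IsStronglyConvexWrt μ f grad) (hfmin : ∀ v, fmin ≤ f v) (x v : E) :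
    ⟪x - v, grad v⟫_ℝ ≤ (f x - fmin) - μ / 2 * ‖v - x‖ ^ 2 := by
  have := hsc x v
  have := hfmin v
  rw [norm_sub_rev v x]
  linarith

lemma two_mul_real_inner_le_norm_sq_add (η : ℝ) (a b : E) :
    2 * η * ⟪a, b⟫_ℝ ≤ ‖a‖ ^ 2 + η ^ 2 * ‖b‖ ^ 2 := by
  have h := norm_sub_sq_real a (η • b)
  rw [real_inner_smul_right, norm_smul, mul_pow, Real.norm_eq_abs, sq_abs] at h
  linarith [sq_nonneg ‖a - η • b‖]

lemma mul_one_sub_mul_norm_sq_sub_le (η : ℝ) (a b : E) :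
    η * (1 - η) * ‖a‖ ^ 2 - (1 - η) * ‖b‖ ^ 2 ≤ η * ‖a + b‖ ^ 2 := by
  have hηa := norm_add_sq_real (η • a) b
  rw [real_inner_smul_left, norm_smul, mul_pow, Real.norm_eq_abs, sq_abs] at hηa
  rw [norm_add_sq_real a b]
  linarith [sq_nonneg ‖η • a + b‖]

end InnerProductSpace

section Expectation

variable {Ω E : Type*} [MeasurableSpace Ω] {P : Measure Ω}
  [NormedAddCommGroup E] [InnerProductSpace ℝ E]

lemma integrable_norm_smul_sum_sq {ι : Type*} (s : Finset ι) (c : ℝ) {X : ι → Ω → E}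
    (hX : ∀ j ∈ s, AEStronglyMeasurable (X j) P)
    (hX2 : ∀ j ∈ s, Integrable (fun ω => ‖X j ω‖ ^ 2) P) :
    Integrable (fun ω => ‖c • ∑ j ∈ s, X j ω‖ ^ 2) P := by
  have hmeas : AEStronglyMeasurable (fun ω => c • ∑ j ∈ s, X j ω) P :=
    (Finset.aestronglyMeasurable_fun_sum s hX).const_smul c
  refine Integrable.mono' ((integrable_finsetSum s hX2).const_mul (c ^ 2 * #s))
    (hmeas.norm.pow 2) (Filter.Eventually.of_forall fun ω => ?_)
  rw [Real.norm_of_nonneg (by positivity), norm_smul, mul_pow, Real.norm_eq_abs, sq_abs,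
    mul_assoc]
  gcongr
  exact norm_sum_sq_le_card_mul s _

lemma integral_norm_smul_sum_sq_le {ι : Type*} (s : Finset ι) (c : ℝ) {C : ℝ} {X : ι → Ω → E}
    (hX : ∀ j ∈ s, AEStronglyMeasurable (X j) P)
    (hX2 : ∀ j ∈ s, Integrable (fun ω => ‖X j ω‖ ^ 2) P)
    (hC : ∀ j ∈ s, ∫ ω, ‖X j ω‖ ^ 2 ∂P ≤ C) :
    ∫ ω, ‖c • ∑ j ∈ s, X j ω‖ ^ 2 ∂P ≤ c ^ 2 * (#s ^ 2 * C) := by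
  calc ∫ ω, ‖c • ∑ j ∈ s, X j ω‖ ^ 2 ∂P
      ≤ ∫ ω, c ^ 2 * (#s * ∑ j ∈ s, ‖X j ω‖ ^ 2) ∂P := by
        refine integral_mono (integrable_norm_smul_sum_sq s c hX hX2)
          (((integrable_finsetSum s hX2).const_mul _).const_mul _) fun ω => ?_
        rw [norm_smul, mul_pow, Real.norm_eq_abs, sq_abs]
        gcongr
        exact norm_sum_sq_le_card_mul s _
    _ = c ^ 2 * (#s * ∑ j ∈ s, ∫ ω, ‖X j ω‖ ^ 2 ∂P) := by
        rw [integral_const_mul, integral_const_mul, integral_finsetSum s hX2]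
    _ ≤ c ^ 2 * (#s * ∑ j ∈ s, C) := by gcongr with j hj; exact hC j hj
    _ = c ^ 2 * (#s ^ 2 * C) := by rw [sum_const, nsmul_eq_mul]; ring

lemma IsStronglyConvexWrt.integral_inner_le [IsProbabilityMeasure P] {μ fmin : ℝ}
    {f : E → ℝ} {grad : E → E} (hsc : IsStronglyConvexWrt μ f grad) (hfmin : ∀ v, fmin ≤ f v)
    (x : E) {θ : Ω → E} (hip : Integrable (fun ω => ⟪x - θ ω, grad (θ ω)⟫_ℝ) P)
    (hθ2 : Integrable (fun ω => ‖θ ω - x‖ ^ 2) P) :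
    ∫ ω, ⟪x - θ ω, grad (θ ω)⟫_ℝ ∂P ≤ (f x - fmin) - μ / 2 * ∫ ω, ‖θ ω - x‖ ^ 2 ∂P := by
  calc ∫ ω, ⟪x - θ ω, grad (θ ω)⟫_ℝ ∂P
      ≤ ∫ ω, ((f x - fmin) - μ / 2 * ‖θ ω - x‖ ^ 2) ∂P :=
        integral_mono hip ((integrable_const _).sub (hθ2.const_mul _))
          fun ω => hsc.inner_le hfmin x (θ ω)
    _ = _ := by
        rw [integral_sub (integrable_const _) (hθ2.const_mul _), integral_const,
          integral_const_mul, probReal_univ, one_smul]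

theorem two_mul_integral_inner_le_of_drift [IsProbabilityMeasure P]
    {μ η fmin C D : ℝ} {f : E → ℝ} {grad : E → E} (hμ : 0 ≤ μ) (hη0 : 0 ≤ η) (hη1 : η ≤ 1)
    (hsc : IsStronglyConvexWrt μ f grad) (hfmin : ∀ v, fmin ≤ f v) (x : E) {θh θ g : Ω → E}
    (hθh2 : Integrable (fun ω => ‖θh ω - x‖ ^ 2) P)
    (hθ2 : Integrable (fun ω => ‖θ ω - x‖ ^ 2) P)
    (hdrift2 : Integrable (fun ω => ‖θ ω - θh ω‖ ^ 2) P)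
    (hg2 : Integrable (fun ω => ‖g ω‖ ^ 2) P)
    (hipθh : Integrable (fun ω => ⟪x - θh ω, g ω⟫_ℝ) P)
    (hipθ : Integrable (fun ω => ⟪x - θ ω, g ω⟫_ℝ) P)
    (hipgrad : Integrable (fun ω => ⟪x - θ ω, grad (θ ω)⟫_ℝ) P)
    (hunbiased : ∫ ω, ⟪x - θ ω, g ω⟫_ℝ ∂P = ∫ ω, ⟪x - θ ω, grad (θ ω)⟫_ℝ ∂P)
    (hgC : ∫ ω, ‖g ω‖ ^ 2 ∂P ≤ C) (hdriftD : ∫ ω, ‖θ ω - θh ω‖ ^ 2 ∂P ≤ D) :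
    2 * η * ∫ ω, ⟪x - θh ω, g ω⟫_ℝ ∂P
      ≤ 2 * η * (f x - fmin) - μ * η * (1 - η) * ∫ ω, ‖θh ω - x‖ ^ 2 ∂P
        + (1 + μ * (1 - η)) * D + η ^ 2 * C := by
  have hipdrift : Integrable (fun ω => ⟪θ ω - θh ω, g ω⟫_ℝ) P :=
    (hipθh.sub hipθ).congr <| Filter.Eventually.of_forall fun ω => by
      simp only [Pi.sub_apply, ← inner_sub_left, sub_sub_sub_cancel_left]
  have hsplit : ∫ ω, ⟪x - θh ω, g ω⟫_ℝ ∂P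
      = ∫ ω, ⟪x - θ ω, g ω⟫_ℝ ∂P + ∫ ω, ⟪θ ω - θh ω, g ω⟫_ℝ ∂P := by
    rw [← integral_add hipθ hipdrift]
    simp only [← inner_add_left, sub_add_sub_cancel]
  have hconvex := hunbiased ▸ hsc.integral_inner_le hfmin x hipgrad hθ2
  have hdistance : η * (1 - η) * ∫ ω, ‖θh ω - x‖ ^ 2 ∂P - (1 - η) * ∫ ω, ‖θ ω - θh ω‖ ^ 2 ∂P
      ≤ η * ∫ ω, ‖θ ω - x‖ ^ 2 ∂P := by
    rw [← integral_const_mul, ← integral_const_mul, ← integral_const_mul,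
      ← integral_sub (hθh2.const_mul _) (hdrift2.const_mul _)]
    refine integral_mono ((hθh2.const_mul _).sub (hdrift2.const_mul _)) (hθ2.const_mul _)
      fun ω => ?_
    simpa only [sub_add_sub_cancel'] using
      mul_one_sub_mul_norm_sq_sub_le η (θh ω - x) (θ ω - θh ω)
  have hyoung : 2 * η * ∫ ω, ⟪θ ω - θh ω, g ω⟫_ℝ ∂P
      ≤ ∫ ω, ‖θ ω - θh ω‖ ^ 2 ∂P + η ^ 2 * ∫ ω, ‖g ω‖ ^ 2 ∂P := by
    rw [← integral_const_mul, ← integral_const_mul, ← integral_add hdrift2 (hg2.const_mul _)]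
    exact integral_mono (hipdrift.const_mul _) (hdrift2.add (hg2.const_mul _))
      fun ω => two_mul_real_inner_le_norm_sq_add η _ _
  have hμη : 0 ≤ μ * (1 - η) := mul_nonneg hμ (by linarith)
  rw [hsplit]
  linarith [mul_le_mul_of_nonneg_left hconvex (by positivity : (0 : ℝ) ≤ 2 * η),
    mul_le_mul_of_nonneg_left hdistance hμ, mul_le_mul_of_nonneg_left hdriftD hμη,
    mul_le_mul_of_nonneg_left hgC (sq_nonneg η)]

theorem two_mul_integral_inner_le_of_local_sgd [IsProbabilityMeasure P] {ι : Type*}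
    {μ η fmin C : ℝ} {f : E → ℝ} {grad : E → E} (hμ : 0 ≤ μ) (hη0 : 0 ≤ η) (hη1 : η ≤ 1)
    (hsc : IsStronglyConvexWrt μ f grad) (hfmin : ∀ v, fmin ≤ f v) (x : E) {θh θ g : Ω → E}
    (s : Finset ι) {gs : ι → Ω → E} (hθ : ∀ ω, θ ω = θh ω - η • ∑ j ∈ s, gs j ω)
    (hgs : ∀ j ∈ s, AEStronglyMeasurable (gs j) P)
    (hgs2 : ∀ j ∈ s, Integrable (fun ω => ‖gs j ω‖ ^ 2) P)
    (hgsC : ∀ j ∈ s, ∫ ω, ‖gs j ω‖ ^ 2 ∂P ≤ C)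
    (hθh2 : Integrable (fun ω => ‖θh ω - x‖ ^ 2) P)
    (hθ2 : Integrable (fun ω => ‖θ ω - x‖ ^ 2) P)
    (hg2 : Integrable (fun ω => ‖g ω‖ ^ 2) P)
    (hipθh : Integrable (fun ω => ⟪x - θh ω, g ω⟫_ℝ) P)
    (hipθ : Integrable (fun ω => ⟪x - θ ω, g ω⟫_ℝ) P)
    (hipgrad : Integrable (fun ω => ⟪x - θ ω, grad (θ ω)⟫_ℝ) P)
    (hunbiased : ∫ ω, ⟪x - θ ω, g ω⟫_ℝ ∂P = ∫ ω, ⟪x - θ ω, grad (θ ω)⟫_ℝ ∂P)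
    (hgC : ∫ ω, ‖g ω‖ ^ 2 ∂P ≤ C) :
    2 * η * ∫ ω, ⟪x - θh ω, g ω⟫_ℝ ∂P
      ≤ 2 * η * (f x - fmin) - μ * η * (1 - η) * ∫ ω, ‖θh ω - x‖ ^ 2 ∂P
        + (1 + μ * (1 - η)) * (η ^ 2 * (#s ^ 2 * C)) + η ^ 2 * C := by
  have hdrift ω : θ ω - θh ω = (-η) • ∑ j ∈ s, gs j ω := by
    rw [hθ, neg_smul]
    abel
  have hdrift2 : Integrable (fun ω => ‖θ ω - θh ω‖ ^ 2) P := by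
    simpa only [hdrift] using integrable_norm_smul_sum_sq s (-η) hgs hgs2
  have hdriftD : ∫ ω, ‖θ ω - θh ω‖ ^ 2 ∂P ≤ η ^ 2 * (#s ^ 2 * C) := by
    simpa only [hdrift, neg_sq] using integral_norm_smul_sum_sq_le s (-η) hgs hgs2 hgsC
  exact two_mul_integral_inner_le_of_drift hμ hη0 hη1 hsc hfmin x hθh2 hθ2 hdrift2 hg2 hipθh
    hipθ hipgrad hunbiased hgC hdriftD

end Expectation

lemma sum_Icc_two_sub_one_sq (n : ℕ) :
    ∑ i ∈ Icc 2 n, ((i : ℝ) - 1) ^ 2 = (n : ℝ) * ((n : ℝ) - 1) * (2 * (n : ℝ) - 1) / 6 := by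
  induction n with
  | zero => simp
  | succ k ih =>
    rcases Nat.eq_zero_or_pos k with rfl | hk
    · simp
    · rw [sum_Icc_succ_top (by omega), ih]
      push_cast
      ring

lemma sum_mul_sum_le_of_le_mul_add {ι κ : Type*} (s : Finset ι) (t : Finset κ) {w u : ι → ℝ}
    {a : ι → κ → ℝ} {ρ : κ → ℝ} (hw : ∀ m ∈ s, 0 ≤ w m) (hw1 : ∑ m ∈ s, w m = 1) (α : ℝ)
    (ha : ∀ m ∈ s, ∀ i ∈ t, a m i ≤ α * u m + ρ i) :
    ∑ m ∈ s, w m * ∑ i ∈ t, a m i ≤ #t * α * ∑ m ∈ s, w m * u m + ∑ i ∈ t, ρ i := by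
  calc ∑ m ∈ s, w m * ∑ i ∈ t, a m i ≤ ∑ m ∈ s, w m * ∑ i ∈ t, (α * u m + ρ i) :=
        sum_le_sum fun m hm => mul_le_mul_of_nonneg_left (sum_le_sum (ha m hm)) (hw m hm)
    _ = ∑ m ∈ s, (#t * α * (w m * u m) + w m * ∑ i ∈ t, ρ i) := by
        refine sum_congr rfl fun m _ => ?_
        rw [sum_add_distrib, sum_const, nsmul_eq_mul]
        ring
    _ = _ := by rw [sum_add_distrib, ← mul_sum, ← sum_mul, hw1, one_mul]

theorem stmt_15_general {Ω : Type*} [MeasurableSpace Ω] (P : Measure Ω) [IsProbabilityMeasure P]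
    (d M τ : ℕ) (hτ : 1 ≤ τ)
    (μ G η : ℝ) (hμ : 0 < μ) (hη0 : 0 < η) (hη1 : η ≤ 1)
    (w : Fin M → ℝ) (hw : ∀ m, 0 ≤ w m) (hw1 : ∑ m, w m = 1)
    (F : Fin M → EuclideanSpace ℝ (Fin d) → ℝ)
    (Gm : Fin M → EuclideanSpace ℝ (Fin d) → EuclideanSpace ℝ (Fin d))
    (hsc : ∀ m (v u : EuclideanSpace ℝ (Fin d)),
      2 * (F m v - F m u) ≥ 2 * ⟪v - u, Gm m u⟫_ℝ + μ * ‖v - u‖ ^ 2)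
    (θstar : EuclideanSpace ℝ (Fin d))
    (Fmin : Fin M → ℝ) (hFmin : ∀ m v, Fmin m ≤ F m v)
    (Fstar Γ : ℝ) (hFstar : Fstar = ∑ m, w m * F m θstar)
    (hΓ : Γ = Fstar - ∑ m, w m * Fmin m)
    (θh : Ω → EuclideanSpace ℝ (Fin d))
    (g : Fin M → ℕ → Ω → EuclideanSpace ℝ (Fin d))
    -- local SGD iterates: θ_m^i = θ̂ − η Σ_{j=1}^{i−1} g_{m,j}
    (θloc : Fin M → ℕ → Ω → EuclideanSpace ℝ (Fin d))
    (hθloc : ∀ m i ω, θloc m i ω = θh ω - η • ∑ j ∈ Icc 1 (i - 1), g m j ω)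
    -- integrability of all integrands appearing below
    (hgint : ∀ m, ∀ i ∈ Icc 1 τ, Integrable (fun ω => g m i ω) P)
    (hg2int : ∀ m, ∀ i ∈ Icc 1 τ, Integrable (fun ω => ‖g m i ω‖ ^ 2) P)
    (hθh2int : Integrable (fun ω => ‖θh ω - θstar‖ ^ 2) P)
    (hip0int : ∀ m, ∀ i ∈ Icc 2 τ,
      Integrable (fun ω => ⟪θstar - θh ω, g m i ω⟫_ℝ) P)
    (hip1int : ∀ m, ∀ i ∈ Icc 2 τ,
      Integrable (fun ω => ⟪θstar - θloc m i ω, g m i ω⟫_ℝ) P)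
    (hip2int : ∀ m, ∀ i ∈ Icc 2 τ,
      Integrable (fun ω => ⟪θstar - θloc m i ω, Gm m (θloc m i ω)⟫_ℝ) P)
    (hloc2int : ∀ m, ∀ i ∈ Icc 2 τ,
      Integrable (fun ω => ‖θloc m i ω - θstar‖ ^ 2) P)
    -- bounded second moments of the stochastic gradients
    (hgbound : ∀ m, ∀ i ∈ Icc 1 τ, ∫ ω, ‖g m i ω‖ ^ 2 ∂P ≤ G ^ 2)
    -- unbiasedness identities
    (hunbiased : ∀ m, ∀ i ∈ Icc 2 τ,
      ∫ ω, ⟪θstar - θloc m i ω, g m i ω⟫_ℝ ∂P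
        = ∫ ω, ⟪θstar - θloc m i ω, Gm m (θloc m i ω)⟫_ℝ ∂P) :
    2 * η * ∑ m, w m * ∑ i ∈ Icc 2 τ, ∫ ω, ⟪θstar - θh ω, g m i ω⟫_ℝ ∂P
      ≤ -(μ * η * (1 - η) * ((τ : ℝ) - 1)) * ∫ ω, ‖θh ω - θstar‖ ^ 2 ∂P
        + η ^ 2 * ((τ : ℝ) - 1) * G ^ 2
        + (1 + μ * (1 - η)) * η ^ 2 * G ^ 2
            * ((τ : ℝ) * ((τ : ℝ) - 1) * (2 * (τ : ℝ) - 1) / 6)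
        + 2 * η * ((τ : ℝ) - 1) * Γ := by
  set D := ∫ ω, ‖θh ω - θstar‖ ^ 2 ∂P
  set ρ : ℕ → ℝ := fun i => -(μ * η * (1 - η) * D) + η ^ 2 * G ^ 2
    + (1 + μ * (1 - η)) * η ^ 2 * G ^ 2 * ((i : ℝ) - 1) ^ 2
  have hstep : ∀ m, ∀ i ∈ Icc 2 τ,
      2 * η * ∫ ω, ⟪θstar - θh ω, g m i ω⟫_ℝ ∂P ≤ 2 * η * (F m θstar - Fmin m) + ρ i := by
    intro m i hi
    obtain ⟨hi2, hiτ⟩ := mem_Icc.mp hi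
    have hsub : Icc 1 (i - 1) ⊆ Icc 1 τ := Icc_subset_Icc le_rfl (by omega)
    have hi1 : i ∈ Icc 1 τ := Icc_subset_Icc (by norm_num) le_rfl hi
    have hcard : ((#(Icc 1 (i - 1)) : ℕ) : ℝ) = (i : ℝ) - 1 := by
      simp [Nat.cast_sub (by omega : 1 ≤ i)]
    have := two_mul_integral_inner_le_of_local_sgd hμ.le hη0.le hη1 (hsc m) (hFmin m) θstar
      (Icc 1 (i - 1)) (hθloc m i) (fun j hj => (hgint m j (hsub hj)).aestronglyMeasurable)
      (fun j hj => hg2int m j (hsub hj)) (fun j hj => hgbound m j (hsub hj)) hθh2int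
      (hloc2int m i hi) (hg2int m i hi1) (hip0int m i hi) (hip1int m i hi) (hip2int m i hi)
      (hunbiased m i hi) (hgbound m i hi1)
    rw [hcard] at this
    linarith
  have hΓ' : ∑ m, w m * (F m θstar - Fmin m) = Γ := by
    simp only [mul_sub, sum_sub_distrib, hΓ, hFstar]
  have hcard : ((#(Icc 2 τ) : ℕ) : ℝ) = (τ : ℝ) - 1 := by
    simp [Nat.cast_sub hτ]
  calc 2 * η * ∑ m, w m * ∑ i ∈ Icc 2 τ, ∫ ω, ⟪θstar - θh ω, g m i ω⟫_ℝ ∂P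
      = ∑ m, w m * ∑ i ∈ Icc 2 τ, 2 * η * ∫ ω, ⟪θstar - θh ω, g m i ω⟫_ℝ ∂P := by
        simp only [mul_sum]
        exact sum_congr rfl fun _ _ => sum_congr rfl fun _ _ => by ring
    _ ≤ #(Icc 2 τ) * (2 * η) * ∑ m, w m * (F m θstar - Fmin m) + ∑ i ∈ Icc 2 τ, ρ i :=
        sum_mul_sum_le_of_le_mul_add _ _ (fun m _ => hw m) hw1 _ fun m _ => hstep m
    _ = _ := by
        simp only [hΓ', ρ, sum_add_distrib, sum_const, nsmul_eq_mul, ← mul_sum,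
          sum_Icc_two_sub_one_sq, hcard]
        ring

/-- Lemma 2 of the paper, bounding the cross term
2η Σ_m w_m Σ_{i=2}^τ E⟨θ* − θ̂, g_{m,i}⟩. -/
theorem stmt_15 {Ω : Type*} [MeasurableSpace Ω] (P : Measure Ω) [IsProbabilityMeasure P]
    (d M τ : ℕ) (hd : 1 ≤ d) (hM : 1 ≤ M) (hτ : 1 ≤ τ)
    (μ G η : ℝ) (hμ : 0 < μ) (hG : 0 ≤ G) (hη0 : 0 < η) (hη1 : η ≤ 1)
    (w : Fin M → ℝ) (hw : ∀ m, 0 ≤ w m) (hw1 : ∑ m, w m = 1)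
    (F : Fin M → EuclideanSpace ℝ (Fin d) → ℝ)
    (Gm : Fin M → EuclideanSpace ℝ (Fin d) → EuclideanSpace ℝ (Fin d))
    (hsc : ∀ m (v u : EuclideanSpace ℝ (Fin d)),
      2 * (F m v - F m u) ≥ 2 * ⟪v - u, Gm m u⟫_ℝ + μ * ‖v - u‖ ^ 2)
    (θstar : EuclideanSpace ℝ (Fin d))
    (hmin : ∀ v, ∑ m, w m * F m θstar ≤ ∑ m, w m * F m v)
    (Fmin : Fin M → ℝ) (hFmin : ∀ m v, Fmin m ≤ F m v)
    (Fstar Γ : ℝ) (hFstar : Fstar = ∑ m, w m * F m θstar)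
    (hΓ : Γ = Fstar - ∑ m, w m * Fmin m)
    (θh : Ω → EuclideanSpace ℝ (Fin d))
    (g : Fin M → ℕ → Ω → EuclideanSpace ℝ (Fin d))
    -- local SGD iterates: θ_m^i = θ̂ − η Σ_{j=1}^{i−1} g_{m,j}
    (θloc : Fin M → ℕ → Ω → EuclideanSpace ℝ (Fin d))
    (hθloc : ∀ m i ω, θloc m i ω = θh ω - η • ∑ j ∈ Icc 1 (i - 1), g m j ω)
    -- integrability of all integrands appearing below
    (hθhint : Integrable θh P)
    (hgint : ∀ m, ∀ i ∈ Icc 1 τ, Integrable (fun ω => g m i ω) P)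
    (hg2int : ∀ m, ∀ i ∈ Icc 1 τ, Integrable (fun ω => ‖g m i ω‖ ^ 2) P)
    (hθh2int : Integrable (fun ω => ‖θh ω - θstar‖ ^ 2) P)
    (hip0int : ∀ m, ∀ i ∈ Icc 2 τ,
      Integrable (fun ω => ⟪θstar - θh ω, g m i ω⟫_ℝ) P)
    (hip1int : ∀ m, ∀ i ∈ Icc 2 τ,
      Integrable (fun ω => ⟪θstar - θloc m i ω, g m i ω⟫_ℝ) P)
    (hip2int : ∀ m, ∀ i ∈ Icc 2 τ,
      Integrable (fun ω => ⟪θstar - θloc m i ω, Gm m (θloc m i ω)⟫_ℝ) P)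
    (hloc2int : ∀ m, ∀ i ∈ Icc 2 τ,
      Integrable (fun ω => ‖θloc m i ω - θstar‖ ^ 2) P)
    -- bounded second moments of the stochastic gradients
    (hgbound : ∀ m, ∀ i ∈ Icc 1 τ, ∫ ω, ‖g m i ω‖ ^ 2 ∂P ≤ G ^ 2)
    -- unbiasedness identities
    (hunbiased : ∀ m, ∀ i ∈ Icc 2 τ,
      ∫ ω, ⟪θstar - θloc m i ω, g m i ω⟫_ℝ ∂P
        = ∫ ω, ⟪θstar - θloc m i ω, Gm m (θloc m i ω)⟫_ℝ ∂P) :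
    2 * η * ∑ m, w m * ∑ i ∈ Icc 2 τ, ∫ ω, ⟪θstar - θh ω, g m i ω⟫_ℝ ∂P
      ≤ -(μ * η * (1 - η) * ((τ : ℝ) - 1)) * ∫ ω, ‖θh ω - θstar‖ ^ 2 ∂P
        + η ^ 2 * ((τ : ℝ) - 1) * G ^ 2
        + (1 + μ * (1 - η)) * η ^ 2 * G ^ 2
            * ((τ : ℝ) * ((τ : ℝ) - 1) * (2 * (τ : ℝ) - 1) / 6)
        + 2 * η * ((τ : ℝ) - 1) * Γ :=
  stmt_15_general P d M τ hτ μ G η hμ hη0 hη1 w hw hw1 F Gm hsc θstar Fmin hFmin Fstar Γ hFstar hΓ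
    θh g θloc hθloc hgint hg2int hθh2int hip0int hip1int hip2int hloc2int hgbound hunbiased
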